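/- Let A ∈ ℝ^{m×n}, let 𝔹 = {x ∈ ℝ^n : ℓ ≤ x ≤ u} for given ℓ, u ∈ ℝ^n with ℓ < u (componentwise), and suppose ℝ^n and ℝ^m are endowed with Euclidean norms. Then H(P_{A,𝔹,{0}}) = max_{D ∈ 𝕊} H(P_{AD}) and H(P_{Aᵀ,ℝ^m,−𝔹}) = max_{D ∈ 𝕊} H(P_{AD}*), where 𝕊 is the set of n×n signature matrices. -/

import Mathlib

open Matrix Set

noncomputable section

/-- A norm on `Fin n → ℝ`, given as a function with the norm axioms. -/
structure IsNorm {n : ℕ} (ν : (Fin n → ℝ) → ℝ) : Prop where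
  nonneg : ∀ x, 0 ≤ ν x
  eq_zero_iff : ∀ x, ν x = 0 ↔ x = 0
  smul : ∀ (a : ℝ) (x : Fin n → ℝ), ν (a • x) = |a| * ν x
  triangle : ∀ x y, ν (x + y) ≤ ν x + ν y

/-- The dual norm of `ν`, with respect to the standard dot-product pairing. -/
def dualNorm {n : ℕ} (ν : (Fin n → ℝ) → ℝ) (z : Fin n → ℝ) : ℝ :=
  sSup {r | ∃ x, ν x ≤ 1 ∧ r = z ⬝ᵥ x}

/-- Point-to-set distance induced by the norm `ν`. -/
def distWith {n : ℕ} (ν : (Fin n → ℝ) → ℝ) (x : Fin n → ℝ) (S : Set (Fin n → ℝ)) : ℝ :=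
  sInf ((fun s => ν (x - s)) '' S)

/-- The graph of a set-valued mapping. -/
def graphOf {p q : ℕ} (Φ : (Fin p → ℝ) → Set (Fin q → ℝ)) :
    Set ((Fin p → ℝ) × (Fin q → ℝ)) := {z | z.2 ∈ Φ z.1}

/-- The domain of a set-valued mapping. -/
def domOf {p q : ℕ} (Φ : (Fin p → ℝ) → Set (Fin q → ℝ)) : Set (Fin p → ℝ) :=
  {u | (Φ u).Nonempty}

/-- The image of a set-valued mapping. -/
def imOf {p q : ℕ} (Φ : (Fin p → ℝ) → Set (Fin q → ℝ)) : Set (Fin q → ℝ) :=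
  ⋃ u, Φ u

/-- The inverse of a set-valued mapping. -/
def invOf {p q : ℕ} (Φ : (Fin p → ℝ) → Set (Fin q → ℝ)) : (Fin q → ℝ) → Set (Fin p → ℝ) :=
  fun v => {u | v ∈ Φ u}

/-- A polyhedron: an intersection of finitely many closed half-spaces. -/
def IsPolyhedron {E : Type*} [AddCommGroup E] [Module ℝ E] (S : Set E) : Prop :=
  ∃ (k : ℕ) (f : Fin k → E →ₗ[ℝ] ℝ) (c : Fin k → ℝ), S = {x | ∀ i, f i x ≤ c i}

/-- A set-valued mapping is polyhedral if its graph is a polyhedron. -/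
def IsPolyhedralMapping {p q : ℕ} (Φ : (Fin p → ℝ) → Set (Fin q → ℝ)) : Prop :=
  IsPolyhedron (graphOf Φ)

/-- A set-valued mapping is sublinear if its graph is a convex cone containing the origin. -/
def IsSublinearMapping {p q : ℕ} (Φ : (Fin p → ℝ) → Set (Fin q → ℝ)) : Prop :=
  (0 : Fin q → ℝ) ∈ Φ 0 ∧ Convex ℝ (graphOf Φ) ∧
    ∀ (t : ℝ), 0 ≤ t → ∀ z ∈ graphOf Φ, t • z ∈ graphOf Φ

/-- The Hoffman constant of a set-valued mapping, with respect to the norms `νp, νq`. -/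
def hoffmanConst {p q : ℕ} (νp : (Fin p → ℝ) → ℝ) (νq : (Fin q → ℝ) → ℝ)
    (Φ : (Fin p → ℝ) → Set (Fin q → ℝ)) : ℝ :=
  sSup {r | ∃ u v, u ∈ domOf Φ ∧ v ∈ imOf Φ ∧ v ∉ Φ u ∧
    r = distWith νq v (Φ u) / distWith νp u (invOf Φ v)}

/-- The norm of a sublinear set-valued mapping, with respect to the norms `νp, νq`. -/
def svmNorm {p q : ℕ} (νp : (Fin p → ℝ) → ℝ) (νq : (Fin q → ℝ) → ℝ)
    (Φ : (Fin p → ℝ) → Set (Fin q → ℝ)) : ℝ :=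
  sSup {r | ∃ u, u ∈ domOf Φ ∧ νp u ≤ 1 ∧ r = sInf (νq '' Φ u)}

/-- The tangent cone to a set `G` at a point `g ∈ G`. -/
def polyTangentCone {E : Type*} [AddCommGroup E] [Module ℝ E] (G : Set E) (g : E) : Set E :=
  {d | ∃ t : ℝ, 0 < t ∧ g + t • d ∈ G}

/-- The collection of tangent cones to the graph of `Φ`. -/
def tangentCones {p q : ℕ} (Φ : (Fin p → ℝ) → Set (Fin q → ℝ)) :
    Set (Set ((Fin p → ℝ) × (Fin q → ℝ))) :=
  {T | ∃ u v, v ∈ Φ u ∧ T = polyTangentCone (graphOf Φ) (u, v)}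

/-- The set-valued mapping whose graph is `T`. -/
def mapOfGraph {p q : ℕ} (T : Set ((Fin p → ℝ) × (Fin q → ℝ))) :
    (Fin p → ℝ) → Set (Fin q → ℝ) := fun w => {z | (w, z) ∈ T}

/-- A subset is a linear subspace if it is the underlying set of a submodule. -/
def IsLinearSubspace {E : Type*} [AddCommGroup E] [Module ℝ E] (S : Set E) : Prop :=
  ∃ W : Submodule ℝ E, S = ↑W

/-- The upper adjoint of a sublinear mapping. -/
def upperAdjoint {p q : ℕ} (Φ : (Fin p → ℝ) → Set (Fin q → ℝ)) :
    (Fin q → ℝ) → Set (Fin p → ℝ) :=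
  fun w => {z | ∀ u v, v ∈ Φ u → z ⬝ᵥ u ≤ w ⬝ᵥ v}

/-- The solution mapping `b ↦ {x ∈ R : Ax - b ∈ S}`. -/
def solMap {m n : ℕ} (A : Matrix (Fin m) (Fin n) ℝ) (R : Set (Fin n → ℝ))
    (S : Set (Fin m → ℝ)) : (Fin m → ℝ) → Set (Fin n → ℝ) :=
  fun b => {x | x ∈ R ∧ A *ᵥ x - b ∈ S}

/-- The dual cone `{z : ⟨z,x⟩ ≥ 0 for all x ∈ C}`. -/
def dualConeOf {n : ℕ} (C : Set (Fin n → ℝ)) : Set (Fin n → ℝ) :=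
  {z | ∀ x ∈ C, 0 ≤ z ⬝ᵥ x}

/-- A polyhedral cone. -/
def IsPolyhedralCone {n : ℕ} (C : Set (Fin n → ℝ)) : Prop :=
  IsPolyhedron C ∧ (0 : Fin n → ℝ) ∈ C ∧ ∀ (t : ℝ), 0 ≤ t → ∀ x ∈ C, t • x ∈ C

/-- The dual solution mapping `c ↦ {y ∈ S* : c - Aᵀy ∈ R*}`. -/
def dualSolMap {m n : ℕ} (A : Matrix (Fin m) (Fin n) ℝ) (R : Set (Fin n → ℝ))
    (S : Set (Fin m → ℝ)) : (Fin n → ℝ) → Set (Fin m → ℝ) :=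
  fun c => {y | y ∈ dualConeOf S ∧ c - Aᵀ *ᵥ y ∈ dualConeOf R}

/-- The box `{x : ℓ ≤ x ≤ u}`. -/
def boxSet {n : ℕ} (ℓ u : Fin n → ℝ) : Set (Fin n → ℝ) :=
  {x | ∀ i, ℓ i ≤ x i ∧ x i ≤ u i}

/-- The nonnegative orthant of `ℝ^n`. -/
def nonnegOrthant (n : ℕ) : Set (Fin n → ℝ) := {x | ∀ i, 0 ≤ x i}

/-- The Euclidean norm on `Fin n → ℝ`. -/
def euclNorm {n : ℕ} (x : Fin n → ℝ) : ℝ := Real.sqrt (∑ i, x i ^ 2)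

/-- The operator norm induced by the Euclidean norms. -/
def opNorm2 {m n : ℕ} (M : Matrix (Fin m) (Fin n) ℝ) : ℝ :=
  sSup {r | ∃ x, euclNorm x ≤ 1 ∧ r = euclNorm (M *ᵥ x)}

/-- The chi condition measure `χ(A) = sup_{D} ‖(ADAᵀ)⁻¹AD‖₂`. -/
def chiMeasure {m n : ℕ} (A : Matrix (Fin m) (Fin n) ℝ) : ℝ :=
  sSup {r | ∃ d : Fin n → ℝ, (∀ i, 0 < d i) ∧
    r = opNorm2 ((A * Matrix.diagonal d * Aᵀ)⁻¹ * (A * Matrix.diagonal d))}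

/-- The chi-bar condition measure `χ̄(A) = sup_{D} ‖Aᵀ(ADAᵀ)⁻¹AD‖₂`. -/
def chiBarMeasure {m n : ℕ} (A : Matrix (Fin m) (Fin n) ℝ) : ℝ :=
  sSup {r | ∃ d : Fin n → ℝ, (∀ i, 0 < d i) ∧
    r = opNorm2 (Aᵀ * (A * Matrix.diagonal d * Aᵀ)⁻¹ * (A * Matrix.diagonal d))}

/-- The orthogonal complement (w.r.t. the dot product) of a set. -/
def perpOf {m : ℕ} (L : Set (Fin m → ℝ)) : Set (Fin m → ℝ) :=
  {y | ∀ s ∈ L, y ⬝ᵥ s = 0}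

/-- The mapping `P_A : b ↦ {x ≥ 0 : Ax = b}`. -/
def PA {m n : ℕ} (A : Matrix (Fin m) (Fin n) ℝ) : (Fin m → ℝ) → Set (Fin n → ℝ) :=
  fun b => {x | (∀ i, 0 ≤ x i) ∧ A *ᵥ x = b}

/-- The mapping `P_A* : c ↦ {y : Aᵀy ≤ c}`. -/
def PAstar {m n : ℕ} (A : Matrix (Fin m) (Fin n) ℝ) : (Fin n → ℝ) → Set (Fin m → ℝ) :=
  fun c => {y | ∀ i, (Aᵀ *ᵥ y) i ≤ c i}

/-- Signature vectors: entries equal to `1` or `-1`. -/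
def IsSignVector {n : ℕ} (d : Fin n → ℝ) : Prop := ∀ i, d i = 1 ∨ d i = -1

end

/-!
Both Hoffman constants are suprema of ratios `dist(v, Φ u) / dist(u, Φ⁻¹ v)`. Near a vertex of
the box, selected by a sign vector `d`, the box looks like an orthant: the affine chart
`s ↦ corner + t • (d * s)` turns the box-constrained systems into the standard-form systems of
`A * diagonal d`, cut down by the extra bound `t • s ≤ u - ℓ`.

Every ratio of `P_{AD}` (or `P_{AD}*`) is a ratio of the box mapping: for small `t` the extra
bound is inactive at the two nearest points involved, and both distances scale by `t`.
Conversely, given a ratio of the box mapping, choose `d` so that the nearest point lies in the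
half of the box next to the corner. The extra bound is then inactive near that point, and since
the nearest point in a convex set only depends on the set near that point, the numerator is the
same for the orthant system, while its denominator is not larger.

Finally, the ratios of `P_M` and `P_M*` are bounded (Hoffman's lemma: compactness of the unit
sphere for each of the finitely many active sets), so no supremum collapses to the junk value
of `sSup`.
-/

open Filter Topology

variable {k : ℕ}

theorem euclNorm_eq_norm (x : Fin k → ℝ) :
    euclNorm x = ‖(WithLp.toLp 2 x : EuclideanSpace ℝ (Fin k))‖ := by
  simp [euclNorm, EuclideanSpace.norm_eq]

theorem euclNorm_nonneg (x : Fin k → ℝ) : 0 ≤ euclNorm x := Real.sqrt_nonneg _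

theorem euclNorm_sq (x : Fin k → ℝ) : euclNorm x ^ 2 = x ⬝ᵥ x := by
  rw [euclNorm, Real.sq_sqrt (Finset.sum_nonneg fun i _ => sq_nonneg _)]
  simp [dotProduct, sq]

theorem euclNorm_eq_zero {x : Fin k → ℝ} : euclNorm x = 0 ↔ x = 0 := by
  rw [euclNorm_eq_norm, norm_eq_zero, WithLp.toLp_eq_zero]

theorem euclNorm_pos {x : Fin k → ℝ} (hx : x ≠ 0) : 0 < euclNorm x :=
  (euclNorm_nonneg x).lt_of_ne' (mt euclNorm_eq_zero.1 hx)

theorem euclNorm_smul (t : ℝ) (x : Fin k → ℝ) : euclNorm (t • x) = |t| * euclNorm x := by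
  rw [euclNorm_eq_norm, euclNorm_eq_norm, WithLp.toLp_smul, norm_smul, Real.norm_eq_abs]

theorem euclNorm_sub_comm (x y : Fin k → ℝ) : euclNorm (x - y) = euclNorm (y - x) := by
  rw [euclNorm_eq_norm, euclNorm_eq_norm, WithLp.toLp_sub, WithLp.toLp_sub, norm_sub_rev]

theorem continuous_euclNorm : Continuous (euclNorm (n := k)) := by
  rw [show euclNorm (n := k) = _ from funext euclNorm_eq_norm]
  exact continuous_norm.comp (PiLp.continuous_toLp 2 _)

theorem abs_le_euclNorm (x : Fin k → ℝ) (i : Fin k) : |x i| ≤ euclNorm x := by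
  rw [euclNorm, ← Real.sqrt_sq_eq_abs]
  exact Real.sqrt_le_sqrt (Finset.single_le_sum (fun j _ => sq_nonneg (x j)) (Finset.mem_univ i))

theorem euclNorm_le_of_abs_le {x y : Fin k → ℝ} (h : ∀ i, |x i| ≤ |y i|) :
    euclNorm x ≤ euclNorm y :=
  Real.sqrt_le_sqrt (Finset.sum_le_sum fun i _ => sq_le_sq.2 (h i))

theorem IsSignVector.euclNorm_mul {d : Fin k → ℝ} (hd : IsSignVector d) (x : Fin k → ℝ) :
    euclNorm (d * x) = euclNorm x :=
  le_antisymm (euclNorm_le_of_abs_le fun i => by rcases hd i with h | h <;> simp [h])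
    (euclNorm_le_of_abs_le fun i => by rcases hd i with h | h <;> simp [h])

theorem isCompact_euclNorm_eq_one : IsCompact {x : Fin k → ℝ | euclNorm x = 1} := by
  refine (isCompact_Icc (a := -1) (b := 1)).of_isClosed_subset
    (isClosed_eq continuous_euclNorm continuous_const) fun x hx => ⟨fun i => ?_, fun i => ?_⟩ <;>
  · have := (abs_le_euclNorm x i).trans_eq hx
    simp only [Pi.neg_apply, Pi.one_apply]
    linarith [abs_le.1 this]

theorem dotProduct_sub_smul_self (a z : Fin k → ℝ) (t : ℝ) :
    (a - t • z) ⬝ᵥ (a - t • z) = a ⬝ᵥ a - 2 * t * (a ⬝ᵥ z) + t ^ 2 * (z ⬝ᵥ z) := by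
  simp only [sub_dotProduct, dotProduct_sub, dotProduct_smul, smul_dotProduct, smul_eq_mul,
    dotProduct_comm z a]
  ring

theorem euclNorm_le_euclNorm_iff {x y : Fin k → ℝ} :
    euclNorm x ≤ euclNorm y ↔ x ⬝ᵥ x ≤ y ⬝ᵥ y := by
  rw [← euclNorm_sq, ← euclNorm_sq, pow_le_pow_iff_left₀ (euclNorm_nonneg x) (euclNorm_nonneg y)
    two_ne_zero]

section distWith

variable {x p : Fin k → ℝ} {S : Set (Fin k → ℝ)}

theorem distWith_nonneg (x : Fin k → ℝ) (S : Set (Fin k → ℝ)) : 0 ≤ distWith euclNorm x S :=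
  Real.sInf_nonneg (by rintro _ ⟨s, -, rfl⟩; exact euclNorm_nonneg _)

theorem distWith_le (hp : p ∈ S) : distWith euclNorm x S ≤ euclNorm (x - p) :=
  csInf_le ⟨0, by rintro _ ⟨s, -, rfl⟩; exact euclNorm_nonneg _⟩ ⟨p, hp, rfl⟩

theorem le_distWith {c : ℝ} (hS : S.Nonempty) (h : ∀ s ∈ S, c ≤ euclNorm (x - s)) :
    c ≤ distWith euclNorm x S :=
  le_csInf (hS.image _) (by rintro _ ⟨s, hs, rfl⟩; exact h s hs)

theorem distWith_singleton (x a : Fin k → ℝ) : distWith euclNorm x {a} = euclNorm (x - a) := by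
  simp [distWith]

theorem distWith_eq_zero_of_mem (hx : x ∈ S) : distWith euclNorm x S = 0 :=
  le_antisymm ((distWith_le hx).trans_eq (by simp [euclNorm])) (distWith_nonneg x S)

theorem distWith_le_distWith {x' : Fin k → ℝ} {S' : Set (Fin k → ℝ)} (hS : S.Nonempty)
    (h : ∀ s ∈ S, ∃ s' ∈ S', euclNorm (x' - s') ≤ euclNorm (x - s)) :
    distWith euclNorm x' S' ≤ distWith euclNorm x S :=
  le_distWith hS fun s hs => let ⟨_, hs', hle⟩ := h s hs; (distWith_le hs').trans hle

theorem distWith_image {φ : (Fin k → ℝ) → (Fin k → ℝ)} {t : ℝ} (ht : 0 ≤ t)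
    (hφ : ∀ a b, euclNorm (φ a - φ b) = t * euclNorm (a - b)) (x : Fin k → ℝ)
    (S : Set (Fin k → ℝ)) :
    distWith euclNorm (φ x) (φ '' S) = t * distWith euclNorm x S := by
  rw [distWith, distWith, ← smul_eq_mul, ← Real.sInf_smul_of_nonneg ht, ← Set.image_smul,
    Set.image_image, Set.image_image]
  simp only [hφ, smul_eq_mul]

end distWith

def IsNearestPoint (S : Set (Fin k → ℝ)) (x p : Fin k → ℝ) : Prop :=
  p ∈ S ∧ ∀ s ∈ S, euclNorm (x - p) ≤ euclNorm (x - s)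

section IsNearestPoint

variable {x p : Fin k → ℝ} {S T : Set (Fin k → ℝ)}

theorem exists_isNearestPoint (hS : S.Nonempty) (hcl : IsClosed S) (x : Fin k → ℝ) :
    ∃ p, IsNearestPoint S x p := by
  obtain ⟨s₀, hs₀⟩ := hS
  set R := euclNorm (x - s₀)
  have hf : Continuous fun s => euclNorm (x - s) :=
    continuous_euclNorm.comp (continuous_const.sub continuous_id)
  have hs₀R : s₀ ∈ S ∩ {s | euclNorm (x - s) ≤ R} := ⟨hs₀, le_refl R⟩
  have hK : IsCompact (S ∩ {s | euclNorm (x - s) ≤ R}) := by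
    refine (isCompact_Icc (a := x - fun _ => R) (b := x + fun _ => R)).of_isClosed_subset
      (hcl.inter (isClosed_le hf continuous_const)) fun s hs => ⟨fun i => ?_, fun i => ?_⟩ <;>
    · have := abs_le.1 ((abs_le_euclNorm (x - s) i).trans hs.2)
      simp only [Pi.sub_apply, Pi.add_apply] at this ⊢
      linarith
  obtain ⟨p, ⟨hpS, -⟩, hp⟩ := hK.exists_isMinOn ⟨s₀, hs₀R⟩ hf.continuousOn
  exact ⟨p, hpS, fun s hs => (le_total (euclNorm (x - s)) R).elim
    (fun h => hp ⟨hs, h⟩) fun h => (hp hs₀R).trans h⟩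

theorem IsNearestPoint.distWith_eq (h : IsNearestPoint S x p) :
    distWith euclNorm x S = euclNorm (x - p) :=
  le_antisymm (distWith_le h.1) (le_distWith ⟨p, h.1⟩ h.2)

theorem IsNearestPoint.inter (h : IsNearestPoint S x p) (hT : p ∈ T) :
    IsNearestPoint (S ∩ T) x p :=
  ⟨⟨h.1, hT⟩, fun s hs => h.2 s hs.1⟩

theorem IsNearestPoint.dotProduct_nonpos (h : IsNearestPoint S x p) {z : Fin k → ℝ}
    (hz : ∀ᶠ t in 𝓝[>] (0 : ℝ), p + t • z ∈ S) : (x - p) ⬝ᵥ z ≤ 0 := by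
  have hlim : Tendsto (fun t : ℝ => t * (z ⬝ᵥ z) / 2) (𝓝[>] 0) (𝓝 0) := by
    simpa using ((continuous_id.mul continuous_const).div_const 2).tendsto' (0 : ℝ) 0
      (by simp) |>.mono_left nhdsWithin_le_nhds
  refine ge_of_tendsto hlim ?_
  filter_upwards [hz, self_mem_nhdsWithin] with t hts (ht : 0 < t)
  have hle := euclNorm_le_euclNorm_iff.1 (h.2 _ hts)
  rw [show x - (p + t • z) = (x - p) - t • z by abel, dotProduct_sub_smul_self] at hle
  rw [le_div_iff₀ two_pos]
  nlinarith

theorem isNearestPoint_of_dotProduct_nonpos (hp : p ∈ S)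
    (h : ∀ s ∈ S, (x - p) ⬝ᵥ (s - p) ≤ 0) : IsNearestPoint S x p := by
  refine ⟨hp, fun s hs => euclNorm_le_euclNorm_iff.2 ?_⟩
  have hexp := dotProduct_sub_smul_self (x - p) (s - p) 1
  rw [one_smul, sub_sub_sub_cancel_right] at hexp
  nlinarith [h s hs, euclNorm_sq (s - p) ▸ sq_nonneg (euclNorm (s - p))]

theorem IsNearestPoint.of_inter_mem_nhds (hS : Convex ℝ S) (h : IsNearestPoint (S ∩ T) x p)
    (hT : T ∈ 𝓝 p) : IsNearestPoint S x p := by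
  refine isNearestPoint_of_dotProduct_nonpos h.1.1 fun s hs => h.dotProduct_nonpos ?_
  have hcont : Tendsto (fun t : ℝ => p + t • (s - p)) (𝓝[>] 0) (𝓝 p) := by
    have := (continuous_const.add (continuous_id.smul continuous_const)).tendsto' (0 : ℝ) p
      (by simp : p + (0 : ℝ) • (s - p) = p)
    exact this.mono_left nhdsWithin_le_nhds
  filter_upwards [Ioc_mem_nhdsGT one_pos, hcont hT] with t ht htT
  exact ⟨hS.add_smul_sub_mem h.1.1 hs ⟨ht.1.le, ht.2⟩, htT⟩

theorem IsNearestPoint.distWith_pos (h : IsNearestPoint S x p) (hx : x ∉ S) :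
    0 < distWith euclNorm x S := by
  rw [h.distWith_eq]
  exact euclNorm_pos (sub_ne_zero.2 fun hxp => hx (hxp ▸ h.1))

theorem IsNearestPoint.of_image {φ : (Fin k → ℝ) → (Fin k → ℝ)} {t : ℝ} (ht : 0 < t)
    (hφ : ∀ a b, euclNorm (φ a - φ b) = t * euclNorm (a - b))
    (h : IsNearestPoint (φ '' S) (φ x) (φ p)) : IsNearestPoint S x p := by
  have hinj : Function.Injective φ := fun a b hab => by
    have h0 := hφ a b
    rw [hab, sub_self, euclNorm_eq_zero.2 rfl, eq_comm, mul_eq_zero] at h0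
    exact sub_eq_zero.1 (euclNorm_eq_zero.1 (h0.resolve_left ht.ne'))
  refine ⟨hinj.mem_set_image.1 h.1, fun s hs => ?_⟩
  have := h.2 _ ⟨s, hs, rfl⟩
  rwa [hφ, hφ, mul_le_mul_iff_right₀ ht] at this

end IsNearestPoint

theorem eventually_smul_le (w : Fin k → ℝ) {g : Fin k → ℝ} (hg : ∀ i, 0 < g i) :
    ∀ᶠ t in 𝓝 (0 : ℝ), t • w ≤ g := by
  refine eventually_all.2 fun i => ?_
  have : Tendsto (fun t : ℝ => t * w i) (𝓝 0) (𝓝 0) := by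
    simpa using (tendsto_id (x := 𝓝 (0 : ℝ))).mul_const (w i)
  exact (this.eventually_lt_const (hg i)).mono fun t ht => ht.le

theorem eventually_nonneg_add_mul {a b : ℝ} (ha : 0 ≤ a) (hb : a = 0 → 0 ≤ b) :
    ∀ᶠ t in 𝓝[>] (0 : ℝ), 0 ≤ a + t * b := by
  rcases ha.eq_or_lt with rfl | ha
  · filter_upwards [self_mem_nhdsWithin] with t (ht : 0 < t)
    simpa using mul_nonneg ht.le (hb rfl)
  · have : Tendsto (fun t : ℝ => a + t * b) (𝓝[>] 0) (𝓝 a) := by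
      simpa using (tendsto_const_nhds.add (tendsto_id.mul_const b)).mono_left
        (nhdsWithin_le_nhds (a := (0 : ℝ)))
    exact (this.eventually_const_lt ha).mono fun t ht => ht.le

/-- The reciprocal of `F` is bounded on the compact unit slice of the cone. -/
theorem exists_euclNorm_le_mul_of_cone {K : Set (Fin k → ℝ)} (hK : IsClosed K)
    (hKsmul : ∀ t : ℝ, 0 < t → ∀ g ∈ K, t • g ∈ K) {F : (Fin k → ℝ) → ℝ} (hF : Continuous F)
    (hFsmul : ∀ t : ℝ, 0 < t → ∀ g, F (t • g) = t * F g) (hFpos : ∀ g ∈ K, g ≠ 0 → 0 < F g) :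
    ∃ B, 0 ≤ B ∧ ∀ g ∈ K, euclNorm g ≤ B * F g := by
  set Z := K ∩ {g | euclNorm g = 1}
  have hFZ : ∀ g ∈ Z, 0 < F g := fun g hg =>
    hFpos g hg.1 fun h => by simpa [h, euclNorm] using hg.2
  obtain ⟨C, hC⟩ := (isCompact_euclNorm_eq_one.inter_left hK).exists_bound_of_continuousOn
    (hF.continuousOn.inv₀ fun g hg => (hFZ g hg).ne')
  refine ⟨max C 0, le_max_right _ _, fun g hg => ?_⟩
  rcases eq_or_ne g 0 with rfl | hg0
  · have h0 := hFsmul 2 two_pos 0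
    rw [smul_zero] at h0
    simp [euclNorm, show F 0 = 0 by linarith]
  have hν := euclNorm_pos hg0
  have hgZ : (euclNorm g)⁻¹ • g ∈ Z := ⟨hKsmul _ (inv_pos.2 hν) g hg, by
    show euclNorm _ = 1
    rw [euclNorm_smul, abs_of_pos (inv_pos.2 hν), inv_mul_cancel₀ hν.ne']⟩
  have hB : 1 ≤ max C 0 * F ((euclNorm g)⁻¹ • g) := by
    rw [← inv_le_iff_one_le_mul₀ (hFZ _ hgZ)]
    exact (le_abs_self _).trans ((hC _ hgZ).trans (le_max_left _ _))
  calc euclNorm g ≤ euclNorm g * (max C 0 * F ((euclNorm g)⁻¹ • g)) :=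
        le_mul_of_one_le_right hν.le hB
    _ = max C 0 * F g := by rw [hFsmul _ (inv_pos.2 hν)]; field_simp

theorem isClosed_setOf_forall_dotProduct_nonpos (C : Set (Fin k → ℝ)) :
    IsClosed {g : Fin k → ℝ | ∀ z ∈ C, g ⬝ᵥ z ≤ 0} := by
  simp only [Set.ofPred_forall]
  exact isClosed_biInter fun z _ => isClosed_le (by fun_prop) continuous_const

theorem isClosed_setOf_forall_mem_nonneg (J : Finset (Fin k)) :
    IsClosed {g : Fin k → ℝ | ∀ i ∈ J, 0 ≤ g i} := by
  simp only [Set.ofPred_forall]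
  exact isClosed_biInter fun i _ => isClosed_le continuous_const (continuous_apply i)

section SignVector

variable {n : ℕ} {d : Fin n → ℝ}

theorem IsSignVector.mul_self (hd : IsSignVector d) : d * d = 1 :=
  funext fun i => by rcases hd i with h | h <;> simp [h]

theorem IsSignVector.mul_mul_self (hd : IsSignVector d) (x : Fin n → ℝ) : d * (d * x) = x := by
  rw [← mul_assoc, hd.mul_self, one_mul]

theorem finite_setOf_isSignVector : {d : Fin n → ℝ | IsSignVector d}.Finite :=
  (Set.Finite.pi (t := fun _ => ({1, -1} : Set ℝ)) fun _ => by simp).subset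
    fun d hd i _ => by rcases hd i with h | h <;> simp [h]

theorem mul_diagonal_mulVec {m : ℕ} (A : Matrix (Fin m) (Fin n) ℝ) (d x : Fin n → ℝ) :
    (A * diagonal d) *ᵥ x = A *ᵥ (d * x) := by
  rw [← mulVec_mulVec]
  congr 1
  ext i
  simp [mulVec_diagonal]

theorem transpose_mul_diagonal_mulVec {m : ℕ} (A : Matrix (Fin m) (Fin n) ℝ)
    (d : Fin n → ℝ) (y : Fin m → ℝ) : (A * diagonal d)ᵀ *ᵥ y = d * (Aᵀ *ᵥ y) := by
  ext i
  simp [transpose_mul, ← mulVec_mulVec, mulVec_diagonal]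

noncomputable def boxCorner (ℓ u d : Fin n → ℝ) : Fin n → ℝ :=
  fun i => if d i = 1 then ℓ i else u i

noncomputable def nearCornerSign (ℓ u x : Fin n → ℝ) : Fin n → ℝ :=
  fun i => if x i - ℓ i ≤ u i - x i then 1 else -1

variable {ℓ u : Fin n → ℝ}

theorem boxSet_eq_Icc (ℓ u : Fin n → ℝ) : boxSet ℓ u = Set.Icc ℓ u := by
  ext x
  simp [boxSet, Pi.le_def, forall_and]

theorem IsSignVector.add_mul_mem_boxSet_iff (hd : IsSignVector d) {s : Fin n → ℝ} :
    boxCorner ℓ u d + d * s ∈ boxSet ℓ u ↔ 0 ≤ s ∧ s ≤ u - ℓ := by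
  change (∀ i, _ ∧ _) ↔ (∀ i, _) ∧ (∀ i, _)
  rw [← forall_and]
  refine forall_congr' fun i => ?_
  have hne : (-1 : ℝ) ≠ 1 := by norm_num
  rcases hd i with h | h <;>
  · simp only [boxCorner, Pi.add_apply, Pi.mul_apply, Pi.sub_apply, Pi.zero_apply, h, hne,
      if_true, if_false]
    constructor <;> rintro ⟨h₁, h₂⟩ <;> constructor <;> linarith

theorem IsSignVector.mem_boxSet_iff (hd : IsSignVector d) {x : Fin n → ℝ} :
    x ∈ boxSet ℓ u ↔
      0 ≤ d * (x - boxCorner ℓ u d) ∧ d * (x - boxCorner ℓ u d) ≤ u - ℓ := by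
  rw [← hd.add_mul_mem_boxSet_iff, hd.mul_mul_self, add_sub_cancel]

/-- Carries the nonnegative orthant onto the cone of the box at the corner selected by `d`. -/
noncomputable def cornerChart (ℓ u d : Fin n → ℝ) (t : ℝ) (s : Fin n → ℝ) : Fin n → ℝ :=
  boxCorner ℓ u d + t • (d * s)

theorem IsSignVector.euclNorm_cornerChart_sub (hd : IsSignVector d) (t : ℝ)
    (a b : Fin n → ℝ) :
    euclNorm (cornerChart ℓ u d t a - cornerChart ℓ u d t b) = |t| * euclNorm (a - b) := by
  rw [cornerChart, cornerChart, add_sub_add_left_eq_sub, ← smul_sub, ← mul_sub, euclNorm_smul,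
    hd.euclNorm_mul]

theorem IsSignVector.cornerChart_inv (hd : IsSignVector d) {t : ℝ} (ht : t ≠ 0)
    (x : Fin n → ℝ) : cornerChart ℓ u d t (t⁻¹ • (d * (x - boxCorner ℓ u d))) = x := by
  rw [cornerChart, mul_smul_comm, smul_inv_smul₀ ht, hd.mul_mul_self, add_sub_cancel]

theorem IsSignVector.cornerChart_one_mul_sub (hd : IsSignVector d) (x : Fin n → ℝ) :
    cornerChart ℓ u d 1 (d * (x - boxCorner ℓ u d)) = x := by
  simpa using hd.cornerChart_inv (ℓ := ℓ) (u := u) one_ne_zero x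

theorem IsSignVector.cornerChart_injective (hd : IsSignVector d) {t : ℝ} (ht : t ≠ 0) :
    Function.Injective (cornerChart ℓ u d t) := fun a b h => by
  rw [← hd.mul_mul_self a, ← hd.mul_mul_self b,
    smul_right_injective _ ht (add_left_cancel (a := boxCorner ℓ u d) h)]

theorem IsSignVector.cornerChart_mem_boxSet_iff (hd : IsSignVector d) {t : ℝ}
    {s : Fin n → ℝ} : cornerChart ℓ u d t s ∈ boxSet ℓ u ↔ 0 ≤ t • s ∧ t • s ≤ u - ℓ := by
  rw [cornerChart, ← mul_smul_comm, hd.add_mul_mem_boxSet_iff]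

theorem mulVec_cornerChart {m : ℕ} (A : Matrix (Fin m) (Fin n) ℝ) (t : ℝ) (s : Fin n → ℝ) :
    A *ᵥ cornerChart ℓ u d t s = A *ᵥ boxCorner ℓ u d + t • ((A * diagonal d) *ᵥ s) := by
  rw [cornerChart, mulVec_add, mulVec_smul, mul_diagonal_mulVec]

theorem IsSignVector.cornerChart_sub_transpose_mulVec (hd : IsSignVector d) {m : ℕ}
    (A : Matrix (Fin m) (Fin n) ℝ) (t : ℝ) (c : Fin n → ℝ) (y : Fin m → ℝ) :
    cornerChart ℓ u d t c - Aᵀ *ᵥ (t • y) =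
      cornerChart ℓ u d t (c - (A * diagonal d)ᵀ *ᵥ y) := by
  rw [cornerChart, cornerChart, transpose_mul_diagonal_mulVec, mul_sub, hd.mul_mul_self,
    smul_sub, mulVec_smul, add_sub_assoc]

theorem isSignVector_nearCornerSign (ℓ u x : Fin n → ℝ) :
    IsSignVector (nearCornerSign ℓ u x) :=
  fun i => by unfold nearCornerSign; split_ifs <;> simp

theorem nearCornerSign_mul_sub_boxCorner_lt (hlu : ∀ i, ℓ i < u i) {x : Fin n → ℝ}
    (hx : x ∈ boxSet ℓ u) (i : Fin n) :
    (nearCornerSign ℓ u x * (x - boxCorner ℓ u (nearCornerSign ℓ u x))) i < (u - ℓ) i := by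
  have := hlu i
  have := hx i
  by_cases h : x i - ℓ i ≤ u i - x i <;>
    simp [nearCornerSign, boxCorner, h, show (-1 : ℝ) ≠ 1 by norm_num] <;> linarith

end SignVector

/-- The quotients whose supremum is `hoffmanConst euclNorm euclNorm Φ`. -/
def hoffmanRatios {p q : ℕ} (Φ : (Fin p → ℝ) → Set (Fin q → ℝ)) : Set ℝ :=
  {r | ∃ u v, u ∈ domOf Φ ∧ v ∈ imOf Φ ∧ v ∉ Φ u ∧
    r = distWith euclNorm v (Φ u) / distWith euclNorm u (invOf Φ v)}

section hoffmanRatios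

variable {p q : ℕ} {Φ : (Fin p → ℝ) → Set (Fin q → ℝ)}

theorem hoffmanRatios_nonneg : ∀ r ∈ hoffmanRatios Φ, 0 ≤ r := by
  rintro _ ⟨u, v, -, -, -, rfl⟩
  exact div_nonneg (distWith_nonneg _ _) (distWith_nonneg _ _)

theorem div_mem_hoffmanRatios {u : Fin p → ℝ} {v : Fin q → ℝ} (hu : u ∈ domOf Φ)
    (hv : v ∈ imOf Φ) (hpos : 0 < distWith euclNorm v (Φ u)) :
    distWith euclNorm v (Φ u) / distWith euclNorm u (invOf Φ v) ∈ hoffmanRatios Φ :=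
  ⟨u, v, hu, hv, fun h => hpos.ne' (distWith_eq_zero_of_mem h), rfl⟩

end hoffmanRatios

/-- The nonnegativity of `S` makes the junk value `sSup ∅ = 0` harmless. -/
theorem sSup_eq_sSup_of_finite {ι : Type*} {P : ι → Prop} (hP : {i | P i}.Finite)
    {S : Set ℝ} {T : ι → Set ℝ} (hS : ∀ r ∈ S, 0 ≤ r) (hTS : ∀ i, P i → T i ⊆ S)
    (hST : ∀ r ∈ S, ∃ i, P i ∧ ∃ r' ∈ T i, r ≤ r') (hT : ∀ i, P i → BddAbove (T i)) :
    sSup S = sSup {r | ∃ i, P i ∧ r = sSup (T i)} := by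
  set U := {r | ∃ i, P i ∧ r = sSup (T i)}
  have hU : BddAbove U := by
    refine ((hP.image fun i => sSup (T i)).subset ?_).bddAbove
    rintro _ ⟨i, hi, rfl⟩
    exact ⟨i, hi, rfl⟩
  have hTU : ∀ i, P i → sSup (T i) ≤ sSup U := fun i hi => le_csSup hU ⟨i, hi, rfl⟩
  have hSU : ∀ r ∈ S, r ≤ sSup U := fun r hr =>
    let ⟨i, hi, r', hr', hle⟩ := hST r hr
    hle.trans ((le_csSup (hT i hi) hr').trans (hTU i hi))
  have hSbdd : BddAbove S := ⟨sSup U, hSU⟩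
  have hT0 : ∀ i, P i → 0 ≤ sSup (T i) := fun i hi =>
    Real.sSup_nonneg fun r hr => hS r (hTS i hi hr)
  refine le_antisymm (Real.sSup_le hSU (Real.sSup_nonneg ?_))
    (Real.sSup_le ?_ (Real.sSup_nonneg hS))
  · rintro _ ⟨i, hi, rfl⟩
    exact hT0 i hi
  · rintro _ ⟨i, hi, rfl⟩
    exact Real.sSup_le (fun r hr => le_csSup hSbdd (hTS i hi hr)) (Real.sSup_nonneg hS)

section solMap

variable {m n : ℕ} {A : Matrix (Fin m) (Fin n) ℝ} {R : Set (Fin n → ℝ)}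

theorem mem_solMap_zero {b : Fin m → ℝ} {x : Fin n → ℝ} :
    x ∈ solMap A R {0} b ↔ x ∈ R ∧ A *ᵥ x = b := by
  simp [solMap, sub_eq_zero]

theorem imOf_solMap_zero : imOf (solMap A R {0}) = R := by
  ext x
  simp only [imOf, Set.mem_iUnion, mem_solMap_zero]
  exact ⟨fun ⟨_, hx, _⟩ => hx, fun hx => ⟨_, hx, rfl⟩⟩

theorem invOf_solMap_zero {x : Fin n → ℝ} (hx : x ∈ R) :
    invOf (solMap A R {0}) x = {A *ᵥ x} := by
  ext b
  simp only [invOf, Set.mem_ofPred_eq, mem_solMap_zero, Set.mem_singleton_iff, eq_comm (a := b)]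
  exact and_iff_right hx

theorem isClosed_solMap_zero (hR : IsClosed R) (b : Fin m → ℝ) : IsClosed (solMap A R {0} b) := by
  simp only [solMap, sub_eq_zero, Set.mem_singleton_iff]
  exact hR.inter (isClosed_eq (by fun_prop) continuous_const)

theorem convex_solMap_zero (hR : Convex ℝ R) (b : Fin m → ℝ) : Convex ℝ (solMap A R {0} b) := by
  refine fun x hx y hy a c ha hc hac => mem_solMap_zero.2 ⟨hR (mem_solMap_zero.1 hx).1
    (mem_solMap_zero.1 hy).1 ha hc hac, ?_⟩
  rw [mulVec_add, mulVec_smul, mulVec_smul, (mem_solMap_zero.1 hx).2, (mem_solMap_zero.1 hy).2,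
    ← add_smul, hac, one_smul]

theorem PA_eq_solMap (M : Matrix (Fin m) (Fin n) ℝ) : PA M = solMap M (Set.Ici 0) {0} := by
  ext b x
  rw [mem_solMap_zero]
  rfl

end solMap

theorem isClosed_PA {m n : ℕ} (M : Matrix (Fin m) (Fin n) ℝ) (b : Fin m → ℝ) :
    IsClosed (PA M b) := by
  rw [PA_eq_solMap]
  exact isClosed_solMap_zero isClosed_Ici b

theorem convex_PA {m n : ℕ} (M : Matrix (Fin m) (Fin n) ℝ) (b : Fin m → ℝ) :
    Convex ℝ (PA M b) := by
  rw [PA_eq_solMap]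
  exact convex_solMap_zero (convex_Ici 0) b

section primal

variable {m n : ℕ} {A : Matrix (Fin m) (Fin n) ℝ} {ℓ u d : Fin n → ℝ}

theorem IsSignVector.solMap_boxSet_eq_image (hd : IsSignVector d) {t : ℝ} (ht : 0 < t)
    (b : Fin m → ℝ) :
    solMap A (boxSet ℓ u) {0} (A *ᵥ boxCorner ℓ u d + t • b) =
      cornerChart ℓ u d t '' (PA (A * diagonal d) b ∩ {s | t • s ≤ u - ℓ}) := by
  ext x
  obtain ⟨s, rfl⟩ : ∃ s, cornerChart ℓ u d t s = x := ⟨_, hd.cornerChart_inv ht.ne' x⟩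
  rw [(hd.cornerChart_injective ht.ne').mem_set_image, mem_solMap_zero,
    hd.cornerChart_mem_boxSet_iff, mulVec_cornerChart, add_right_inj,
    smul_right_inj ht.ne', smul_nonneg_iff_nonneg_of_pos_left ht]
  exact ⟨fun ⟨⟨h0, h1⟩, h2⟩ => ⟨⟨h0, h2⟩, h1⟩,
    fun ⟨⟨h0, h2⟩, h1⟩ => ⟨⟨h0, h1⟩, h2⟩⟩

theorem hoffmanRatios_PA_subset (hlu : ∀ i, ℓ i < u i) (hd : IsSignVector d) :
    hoffmanRatios (PA (A * diagonal d)) ⊆ hoffmanRatios (solMap A (boxSet ℓ u) {0}) := by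
  rintro _ ⟨b, v, hb, hv, hvb, rfl⟩
  have hv0 : 0 ≤ v := by rwa [PA_eq_solMap, imOf_solMap_zero] at hv
  obtain ⟨p, hp⟩ := exists_isNearestPoint hb (isClosed_PA _ b) v
  have hgap : ∀ i, 0 < (u - ℓ) i := fun i => sub_pos.2 (hlu i)
  obtain ⟨t, ⟨hvt, hpt⟩, ht : 0 < t⟩ := (((eventually_smul_le v hgap).and
    (eventually_smul_le p hgap)).filter_mono nhdsWithin_le_nhds |>.and
      (self_mem_nhdsWithin (s := Set.Ioi 0))).exists
  have himg := hd.solMap_boxSet_eq_image (A := A) (ℓ := ℓ) (u := u) ht b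
  have hvbox : cornerChart ℓ u d t v ∈ boxSet ℓ u :=
    hd.cornerChart_mem_boxSet_iff.2 ⟨smul_nonneg ht.le hv0, hvt⟩
  have hnum : distWith euclNorm (cornerChart ℓ u d t v)
      (solMap A (boxSet ℓ u) {0} (A *ᵥ boxCorner ℓ u d + t • b)) =
      t * distWith euclNorm v (PA (A * diagonal d) b) := by
    rw [himg, distWith_image ht.le (by simp [hd.euclNorm_cornerChart_sub, abs_of_pos ht]),
      (hp.inter hpt).distWith_eq, hp.distWith_eq]
  have hden : distWith euclNorm (A *ᵥ boxCorner ℓ u d + t • b)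
      (invOf (solMap A (boxSet ℓ u) {0}) (cornerChart ℓ u d t v)) =
      t * distWith euclNorm b (invOf (PA (A * diagonal d)) v) := by
    rw [invOf_solMap_zero hvbox, PA_eq_solMap, invOf_solMap_zero hv0, distWith_singleton,
      distWith_singleton, mulVec_cornerChart, add_sub_add_left_eq_sub, ← smul_sub,
      euclNorm_smul, abs_of_pos ht]
  rw [← mul_div_mul_left _ _ ht.ne', ← hnum, ← hden]
  refine div_mem_hoffmanRatios ?_ (imOf_solMap_zero (A := A) ▸ hvbox) ?_
  · show Set.Nonempty _
    rw [himg]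
    exact ⟨_, p, ⟨hp.1, hpt⟩, rfl⟩
  · rw [hnum]
    exact mul_pos ht (hp.distWith_pos hvb)

theorem exists_mem_hoffmanRatios_PA (hlu : ∀ i, ℓ i < u i) {r : ℝ}
    (hr : r ∈ hoffmanRatios (solMap A (boxSet ℓ u) {0})) :
    ∃ d, IsSignVector d ∧ r ∈ hoffmanRatios (PA (A * diagonal d)) := by
  obtain ⟨b, v, hb, hv, hvb, rfl⟩ := hr
  rw [imOf_solMap_zero] at hv
  obtain ⟨p, hp⟩ := exists_isNearestPoint hb
    (isClosed_solMap_zero (boxSet_eq_Icc ℓ u ▸ isClosed_Icc) b) v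
  have hpbox : p ∈ boxSet ℓ u := (mem_solMap_zero.1 hp.1).1
  set d := nearCornerSign ℓ u p
  have hd : IsSignVector d := isSignVector_nearCornerSign ℓ u p
  set c := boxCorner ℓ u d
  set M := A * diagonal d
  have himg := hd.solMap_boxSet_eq_image (A := A) (ℓ := ℓ) (u := u) one_pos (b - A *ᵥ c)
  rw [one_smul, add_sub_cancel] at himg
  have hT : {s : Fin n → ℝ | (1 : ℝ) • s ≤ u - ℓ} ∈ 𝓝 (d * (p - c)) := by
    simp only [one_smul]
    exact pi_Iic_mem_nhds (nearCornerSign_mul_sub_boxCorner_lt hlu hpbox)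
  have hnear : IsNearestPoint (PA M (b - A *ᵥ c)) (d * (v - c)) (d * (p - c)) := by
    refine (IsNearestPoint.of_image (φ := cornerChart ℓ u d 1) one_pos (fun a a' => ?_)
      ?_).of_inter_mem_nhds (convex_PA M _) hT
    · rw [hd.euclNorm_cornerChart_sub, abs_one]
    · rwa [hd.cornerChart_one_mul_sub, hd.cornerChart_one_mul_sub, ← himg]
  have hv0 : 0 ≤ d * (v - c) := (hd.mem_boxSet_iff.1 hv).1
  have hnum : distWith euclNorm v (solMap A (boxSet ℓ u) {0} b) =
      distWith euclNorm (d * (v - c)) (PA M (b - A *ᵥ c)) := by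
    rw [hp.distWith_eq, hnear.distWith_eq, ← mul_sub, sub_sub_sub_cancel_right, hd.euclNorm_mul]
  have hden : distWith euclNorm b (invOf (solMap A (boxSet ℓ u) {0}) v) =
      distWith euclNorm (b - A *ᵥ c) (invOf (PA M) (d * (v - c))) := by
    rw [invOf_solMap_zero hv, PA_eq_solMap, invOf_solMap_zero hv0, distWith_singleton,
      distWith_singleton, mul_diagonal_mulVec, hd.mul_mul_self, mulVec_sub,
      sub_sub_sub_cancel_right]
  refine ⟨d, hd, ?_⟩
  rw [hnum, hden]
  exact div_mem_hoffmanRatios ⟨_, hnear.1⟩ (by rwa [PA_eq_solMap, imOf_solMap_zero])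
    (hnum ▸ hp.distWith_pos hvb)

end primal

/-- The residual `v - p` to the nearest point `p` lies in a closed cone determined by the active
set `{i | p i = 0}`, and `‖M ·‖` vanishes on that cone only at `0`. -/
theorem bddAbove_hoffmanRatios_PA {m n : ℕ} (M : Matrix (Fin m) (Fin n) ℝ) :
    BddAbove (hoffmanRatios (PA M)) := by
  classical
  set K : Finset (Fin n) → Set (Fin n → ℝ) := fun J => {g | ∀ i ∈ J, 0 ≤ g i} ∩
    {g | ∀ z ∈ {z | M *ᵥ z = 0 ∧ ∀ i ∈ J, 0 ≤ z i}, g ⬝ᵥ z ≤ 0}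
  have hbound : ∀ J, ∃ B, 0 ≤ B ∧ ∀ g ∈ K J, euclNorm g ≤ B * euclNorm (M *ᵥ g) := by
    intro J
    refine exists_euclNorm_le_mul_of_cone ((isClosed_setOf_forall_mem_nonneg J).inter
      (isClosed_setOf_forall_dotProduct_nonpos _)) ?_ (continuous_euclNorm.comp (by fun_prop))
      (fun t ht g => by rw [mulVec_smul, euclNorm_smul, abs_of_pos ht]) ?_
    · exact fun t ht g ⟨h1, h2⟩ => ⟨fun i hi => mul_nonneg ht.le (h1 i hi), fun z hz => by
        rw [smul_dotProduct, smul_eq_mul]; exact mul_nonpos_of_nonneg_of_nonpos ht.le (h2 z hz)⟩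
    · refine fun g ⟨h1, h2⟩ hg => euclNorm_pos fun hMg => hg (dotProduct_self_eq_zero.1 ?_)
      exact le_antisymm (h2 g ⟨hMg, h1⟩) (euclNorm_sq g ▸ sq_nonneg _)
  choose B hB0 hB using hbound
  refine ⟨∑ J, B J, ?_⟩
  rintro _ ⟨b, v, hb, hv, -, rfl⟩
  have hv0 : 0 ≤ v := by rwa [PA_eq_solMap, imOf_solMap_zero] at hv
  obtain ⟨p, hp⟩ := exists_isNearestPoint hb (isClosed_PA M b) v
  obtain ⟨hp0, hMp⟩ := hp.1
  set J := Finset.univ.filter fun i => p i = 0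
  have hK : v - p ∈ K J := by
    refine ⟨fun i hi => ?_, fun z ⟨hMz, hzJ⟩ => hp.dotProduct_nonpos ?_⟩
    · simpa [(Finset.mem_filter.1 hi).2] using hv0 i
    · filter_upwards [eventually_all.2 fun i => eventually_nonneg_add_mul (hp0 i)
        fun h => hzJ i (by simp [J, h])] with t ht
      exact ⟨ht, by rw [mulVec_add, mulVec_smul, hMz, smul_zero, add_zero, hMp]⟩
  rw [hp.distWith_eq, PA_eq_solMap, invOf_solMap_zero hv0, distWith_singleton, euclNorm_sub_comm b,
    ← hMp, ← mulVec_sub]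
  exact (div_le_of_le_mul₀ (euclNorm_nonneg _) (hB0 J) (hB J _ hK)).trans
    (Finset.single_le_sum (fun J _ => hB0 J) (Finset.mem_univ J))

/-- The mapping `P_{Aᵀ,ℝ^m,−𝔹}`. -/
def dualBoxMap {m n : ℕ} (A : Matrix (Fin m) (Fin n) ℝ) (ℓ u : Fin n → ℝ) :
    (Fin n → ℝ) → Set (Fin m → ℝ) :=
  fun c => {y | c - Aᵀ *ᵥ y ∈ boxSet ℓ u}

section dual

variable {m n : ℕ}

theorem isClosed_PAstar (M : Matrix (Fin m) (Fin n) ℝ) (c : Fin n → ℝ) :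
    IsClosed (PAstar M c) :=
  isClosed_Iic.preimage (f := fun y => Mᵀ *ᵥ y) (by fun_prop)

theorem convex_PAstar (M : Matrix (Fin m) (Fin n) ℝ) (c : Fin n → ℝ) :
    Convex ℝ (PAstar M c) :=
  (convex_Iic c).linear_preimage (Mᵀ.mulVecLin)

theorem isClosed_dualBoxMap (A : Matrix (Fin m) (Fin n) ℝ) (ℓ u c : Fin n → ℝ) :
    IsClosed (dualBoxMap A ℓ u c) :=
  (boxSet_eq_Icc ℓ u ▸ isClosed_Icc).preimage (f := fun y => c - Aᵀ *ᵥ y) (by fun_prop)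

variable {A : Matrix (Fin m) (Fin n) ℝ} {ℓ u d : Fin n → ℝ}

theorem IsSignVector.mem_dualBoxMap_cornerChart_iff (hd : IsSignVector d) {t : ℝ} (ht : 0 < t)
    {c : Fin n → ℝ} {y : Fin m → ℝ} :
    t • y ∈ dualBoxMap A ℓ u (cornerChart ℓ u d t c) ↔
      y ∈ PAstar (A * diagonal d) c ∧ t • (c - (A * diagonal d)ᵀ *ᵥ y) ≤ u - ℓ := by
  rw [dualBoxMap, Set.mem_ofPred_eq, hd.cornerChart_sub_transpose_mulVec,
    hd.cornerChart_mem_boxSet_iff, smul_nonneg_iff_nonneg_of_pos_left ht, sub_nonneg]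
  rfl

theorem IsSignVector.dualBoxMap_cornerChart_eq_image (hd : IsSignVector d) {t : ℝ} (ht : 0 < t)
    (c : Fin n → ℝ) :
    dualBoxMap A ℓ u (cornerChart ℓ u d t c) = (fun y => t • y) ''
      (PAstar (A * diagonal d) c ∩ {y | t • (c - (A * diagonal d)ᵀ *ᵥ y) ≤ u - ℓ}) := by
  ext y
  obtain ⟨y, rfl⟩ : ∃ y', t • y' = y := ⟨t⁻¹ • y, smul_inv_smul₀ ht.ne' y⟩
  rw [(smul_right_injective _ ht.ne').mem_set_image, hd.mem_dualBoxMap_cornerChart_iff ht]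
  rfl

theorem IsSignVector.invOf_dualBoxMap_eq_image (hd : IsSignVector d) {t : ℝ} (ht : 0 < t)
    (y : Fin m → ℝ) :
    invOf (dualBoxMap A ℓ u) (t • y) = cornerChart ℓ u d t ''
      (invOf (PAstar (A * diagonal d)) y ∩
        {c | t • (c - (A * diagonal d)ᵀ *ᵥ y) ≤ u - ℓ}) := by
  ext c
  obtain ⟨c, rfl⟩ : ∃ c', cornerChart ℓ u d t c' = c := ⟨_, hd.cornerChart_inv ht.ne' c⟩
  rw [(hd.cornerChart_injective ht.ne').mem_set_image]
  exact hd.mem_dualBoxMap_cornerChart_iff ht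

theorem distWith_invOf_PAstar_pos {M : Matrix (Fin m) (Fin n) ℝ} {c : Fin n → ℝ}
    {y : Fin m → ℝ} (hy : y ∉ PAstar M c) : 0 < distWith euclNorm c (invOf (PAstar M) y) := by
  obtain ⟨c₁, hc₁⟩ : ∃ c₁, IsNearestPoint (invOf (PAstar M) y) c c₁ :=
    exists_isNearestPoint Set.nonempty_Ici isClosed_Ici c
  exact hc₁.distWith_pos hy

theorem IsSignVector.distWith_invOf_PAstar_le (hd : IsSignVector d) {c : Fin n → ℝ}
    {y : Fin m → ℝ} (hy : y ∈ imOf (dualBoxMap A ℓ u)) :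
    distWith euclNorm (d * (c - boxCorner ℓ u d)) (invOf (PAstar (A * diagonal d)) y) ≤
      distWith euclNorm c (invOf (dualBoxMap A ℓ u) y) := by
  obtain ⟨c₀, hc₀⟩ := Set.mem_iUnion.1 hy
  refine distWith_le_distWith ⟨c₀, hc₀⟩ fun c₂ hc₂ => ⟨d * (c₂ - boxCorner ℓ u d), ?_, ?_⟩
  · have := (hd.mem_dualBoxMap_cornerChart_iff (A := A) (ℓ := ℓ) (u := u) one_pos
      (c := d * (c₂ - boxCorner ℓ u d)) (y := y)).1
    simp only [one_smul, hd.cornerChart_one_mul_sub] at this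
    exact (this hc₂).1
  · rw [← mul_sub, sub_sub_sub_cancel_right, hd.euclNorm_mul]

theorem hoffmanRatios_PAstar_subset (hlu : ∀ i, ℓ i < u i) (hd : IsSignVector d) :
    hoffmanRatios (PAstar (A * diagonal d)) ⊆ hoffmanRatios (dualBoxMap A ℓ u) := by
  rintro _ ⟨c, y, hc, -, hyc, rfl⟩
  set M := A * diagonal d
  obtain ⟨q, hq⟩ := exists_isNearestPoint hc (isClosed_PAstar M c) y
  obtain ⟨c₁, hc₁⟩ : ∃ c₁, IsNearestPoint (invOf (PAstar M) y) c c₁ :=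
    exists_isNearestPoint Set.nonempty_Ici isClosed_Ici c
  have hgap : ∀ i, 0 < (u - ℓ) i := fun i => sub_pos.2 (hlu i)
  obtain ⟨t, ⟨hqt, hc₁t⟩, ht : 0 < t⟩ := (((eventually_smul_le (c - Mᵀ *ᵥ q) hgap).and
    (eventually_smul_le (c₁ - Mᵀ *ᵥ y) hgap)).filter_mono nhdsWithin_le_nhds |>.and
      (self_mem_nhdsWithin (s := Set.Ioi 0))).exists
  have himg := hd.dualBoxMap_cornerChart_eq_image (A := A) (ℓ := ℓ) (u := u) ht c
  have hinv := hd.invOf_dualBoxMap_eq_image (A := A) (ℓ := ℓ) (u := u) ht y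
  have hnum : distWith euclNorm (t • y) (dualBoxMap A ℓ u (cornerChart ℓ u d t c)) =
      t * distWith euclNorm y (PAstar M c) := by
    rw [himg, distWith_image ht.le (by simp [← smul_sub, euclNorm_smul, abs_of_pos ht]),
      (hq.inter hqt).distWith_eq, hq.distWith_eq]
  have hden : distWith euclNorm (cornerChart ℓ u d t c) (invOf (dualBoxMap A ℓ u) (t • y)) =
      t * distWith euclNorm c (invOf (PAstar M) y) := by
    rw [hinv, distWith_image ht.le (by simp [hd.euclNorm_cornerChart_sub, abs_of_pos ht]),
      (hc₁.inter hc₁t).distWith_eq, hc₁.distWith_eq]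
  rw [← mul_div_mul_left _ _ ht.ne', ← hnum, ← hden]
  have hyt : cornerChart ℓ u d t c₁ ∈ invOf (dualBoxMap A ℓ u) (t • y) := by
    rw [hinv]
    exact ⟨c₁, ⟨hc₁.1, hc₁t⟩, rfl⟩
  refine div_mem_hoffmanRatios ?_ (Set.mem_iUnion.2 ⟨_, hyt⟩) ?_
  · show Set.Nonempty _
    rw [himg]
    exact ⟨_, q, ⟨hq.1, hqt⟩, rfl⟩
  · rw [hnum]
    exact mul_pos ht (hq.distWith_pos hyc)

theorem exists_le_mem_hoffmanRatios_PAstar (hlu : ∀ i, ℓ i < u i) {r : ℝ}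
    (hr : r ∈ hoffmanRatios (dualBoxMap A ℓ u)) :
    ∃ d, IsSignVector d ∧ ∃ r' ∈ hoffmanRatios (PAstar (A * diagonal d)), r ≤ r' := by
  obtain ⟨cc, y, hcc, hy, hycc, rfl⟩ := hr
  obtain ⟨q, hq⟩ := exists_isNearestPoint hcc (isClosed_dualBoxMap A ℓ u cc) y
  have hx : cc - Aᵀ *ᵥ q ∈ boxSet ℓ u := hq.1
  set d := nearCornerSign ℓ u (cc - Aᵀ *ᵥ q)
  have hd : IsSignVector d := isSignVector_nearCornerSign ℓ u _
  set M := A * diagonal d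
  set c := d * (cc - boxCorner ℓ u d)
  have himg := hd.dualBoxMap_cornerChart_eq_image (A := A) (ℓ := ℓ) (u := u) one_pos c
  rw [show cornerChart ℓ u d 1 c = cc from hd.cornerChart_one_mul_sub cc] at himg
  simp only [one_smul, Set.image_id'] at himg
  have hT : {y : Fin m → ℝ | c - Mᵀ *ᵥ y ≤ u - ℓ} ∈ 𝓝 q := by
    have hq' : c - Mᵀ *ᵥ q = d * (cc - Aᵀ *ᵥ q - boxCorner ℓ u d) := by
      rw [transpose_mul_diagonal_mulVec, ← mul_sub, sub_right_comm]
    exact (continuous_const.sub (by fun_prop)).continuousAt.preimage_mem_nhds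
      (hq' ▸ pi_Iic_mem_nhds (nearCornerSign_mul_sub_boxCorner_lt hlu hx))
  have hnear : IsNearestPoint (PAstar M c) y q :=
    (himg ▸ hq).of_inter_mem_nhds (convex_PAstar M c) hT
  have hyc : y ∉ PAstar M c := fun h => (hq.distWith_pos hycc).ne'
    (hq.distWith_eq.trans (hnear.distWith_eq.symm.trans (distWith_eq_zero_of_mem h)))
  have hmem : distWith euclNorm y (PAstar M c) / distWith euclNorm c (invOf (PAstar M) y) ∈
      hoffmanRatios (PAstar M) := div_mem_hoffmanRatios ⟨q, hnear.1⟩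
    (Set.mem_iUnion.2 ⟨Mᵀ *ᵥ y, fun i => le_rfl⟩) (hnear.distWith_pos hyc)
  refine ⟨d, hd, _, hmem, ?_⟩
  rw [hq.distWith_eq, hnear.distWith_eq]
  exact div_le_div_of_nonneg_left (euclNorm_nonneg _) (distWith_invOf_PAstar_pos hyc)
    (hd.distWith_invOf_PAstar_le hy)

end dual

/-- The residual `y - q` to the nearest point `q` is polar to the directions that keep the
constraints active at `q` satisfied, and on that cone the positive part of the active rows of
`Mᵀ ·` vanishes only at `0`. -/
theorem bddAbove_hoffmanRatios_PAstar {m n : ℕ} (M : Matrix (Fin m) (Fin n) ℝ) :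
    BddAbove (hoffmanRatios (PAstar M)) := by
  classical
  set F : Finset (Fin n) → (Fin m → ℝ) → ℝ := fun J g =>
    euclNorm fun i => if i ∈ J then max ((Mᵀ *ᵥ g) i) 0 else 0
  set K : Finset (Fin n) → Set (Fin m → ℝ) := fun J =>
    {g | ∀ z ∈ {z | ∀ i ∈ J, (Mᵀ *ᵥ z) i ≤ 0}, g ⬝ᵥ z ≤ 0}
  have hbound : ∀ J, ∃ B, 0 ≤ B ∧ ∀ g ∈ K J, euclNorm g ≤ B * F J g := fun J => by
    refine exists_euclNorm_le_mul_of_cone (isClosed_setOf_forall_dotProduct_nonpos _) ?_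
      (continuous_euclNorm.comp (continuous_pi fun i => by split_ifs <;> fun_prop)) ?_ ?_
    · refine fun t ht g hg z hz => ?_
      rw [smul_dotProduct, smul_eq_mul]
      exact mul_nonpos_of_nonneg_of_nonpos ht.le (hg z hz)
    · intro t ht g
      show euclNorm _ = t * euclNorm _
      conv_rhs => rw [← abs_of_pos ht, ← euclNorm_smul]
      congr 1
      ext i
      split_ifs with hi <;> simp [hi, mulVec_smul, mul_max_of_nonneg _ _ ht.le]
    · refine fun g hg hg0 => euclNorm_pos fun h0 => hg0 (dotProduct_self_eq_zero.1
        (le_antisymm (hg g fun i hi => ?_) (euclNorm_sq g ▸ sq_nonneg _)))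
      simpa [hi] using congrFun h0 i
  choose B hB0 hB using hbound
  refine ⟨∑ J, B J, ?_⟩
  rintro _ ⟨c, y, hc, -, -, rfl⟩
  obtain ⟨q, hq⟩ := exists_isNearestPoint hc (isClosed_PAstar M c) y
  set J := Finset.univ.filter fun i => (Mᵀ *ᵥ q) i = c i
  have hK : y - q ∈ K J := fun z hz => hq.dotProduct_nonpos <| by
    filter_upwards [eventually_all.2 fun i => eventually_nonneg_add_mul (sub_nonneg.2 (hq.1 i))
      fun h => neg_nonneg.2 (hz i (by simp [J]; linarith))] with t ht i
    have := ht i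
    simp only [mulVec_add, mulVec_smul, Pi.add_apply, Pi.smul_apply, smul_eq_mul] at this ⊢
    linarith
  have hden : F J (y - q) ≤ distWith euclNorm c (invOf (PAstar M) y) :=
    le_distWith ⟨Mᵀ *ᵥ y, fun i => le_rfl⟩ fun c₂ hc₂ => euclNorm_le_of_abs_le fun i => by
      split_ifs with hi
      · have h1 : (Mᵀ *ᵥ q) i = c i := (Finset.mem_filter.1 hi).2
        have h2 : (Mᵀ *ᵥ y) i ≤ c₂ i := hc₂ i
        rw [abs_of_nonneg (le_max_right _ _), mulVec_sub, Pi.sub_apply, Pi.sub_apply,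
          abs_sub_comm]
        exact max_le (by linarith [le_abs_self (c₂ i - c i)]) (abs_nonneg _)
      · rw [abs_zero]
        exact abs_nonneg _
  rw [hq.distWith_eq]
  exact (div_le_of_le_mul₀ (distWith_nonneg _ _) (hB0 J) ((hB J _ hK).trans
    (mul_le_mul_of_nonneg_left hden (hB0 J)))).trans
      (Finset.single_le_sum (fun J _ => hB0 J) (Finset.mem_univ J))

/-- `H(P_{A,𝔹,{0}}) = max_{D ∈ 𝕊} H(P_{AD})` and
`H(P_{Aᵀ,ℝ^m,−𝔹}) = max_{D ∈ 𝕊} H(P_{AD}*)`, with Euclidean norms. -/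
theorem stmt11 {m n : ℕ} (A : Matrix (Fin m) (Fin n) ℝ)
    (ℓ u : Fin n → ℝ) (hlu : ∀ i, ℓ i < u i) :
    hoffmanConst euclNorm euclNorm (solMap A (boxSet ℓ u) ({0} : Set (Fin m → ℝ))) =
      sSup {r | ∃ d : Fin n → ℝ, IsSignVector d ∧
        r = hoffmanConst euclNorm euclNorm (PA (A * Matrix.diagonal d))} ∧
    hoffmanConst euclNorm euclNorm
        (fun c => {y : Fin m → ℝ | c - Aᵀ *ᵥ y ∈ boxSet ℓ u}) =
      sSup {r | ∃ d : Fin n → ℝ, IsSignVector d ∧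
        r = hoffmanConst euclNorm euclNorm (PAstar (A * Matrix.diagonal d))} := by
  constructor
  · refine sSup_eq_sSup_of_finite (T := fun d => hoffmanRatios (PA (A * diagonal d)))
      finite_setOf_isSignVector hoffmanRatios_nonneg (fun d => hoffmanRatios_PA_subset hlu)
      (fun r hr => ?_) fun d _ => bddAbove_hoffmanRatios_PA _
    obtain ⟨d, hd, hr⟩ := exists_mem_hoffmanRatios_PA hlu hr
    exact ⟨d, hd, r, hr, le_rfl⟩
  · exact sSup_eq_sSup_of_finite (S := hoffmanRatios (dualBoxMap A ℓ u))
      (T := fun d => hoffmanRatios (PAstar (A * diagonal d)))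
      finite_setOf_isSignVector hoffmanRatios_nonneg (fun d => hoffmanRatios_PAstar_subset hlu)
      (fun r => exists_le_mem_hoffmanRatios_PAstar hlu) fun d _ => bddAbove_hoffmanRatios_PAstar _
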